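/- arXiv:1411.6229 — 5 statements merged into one kernel-verified Lean document; each statement's English description precedes it below -/
import Mathlib

section
/- Let τ be a foretellable time, D ∈ ℱ, and X a measurable process on [0,τ). If there exists a nondecreasing sequence (τ_n)_{n∈ℕ} of stopping times with D ⊆ ⋃_n {τ_n ≥ τ} almost surely, such that for each n the stopped process X^{τ_n} (defined by X^{τ_n}_t = X_t for t < τ_n and X^{τ_n}_t = X_{τ_n}·1_{τ_n<τ} for t ≥ τ_n) is extended locally integrable on D, then X is extended locally integrable on D. The same holds with 'integrable' replaced by 'bounded'. In words: an extended locally extended locally integrable (bounded) process is extended locally integrable (bounded). -/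
open MeasureTheory Filter Set
open scoped ENNReal NNReal Topology

namespace PaperStmt

variable {Ω : Type*}

/-- A `[0,∞]`-valued random time is a stopping time for a filtration indexed by `ℝ≥0`. -/
def IsStoppingTimeE {m : MeasurableSpace Ω} (𝓕 : Filtration ℝ≥0 m) (τ : Ω → ℝ≥0∞) : Prop :=
  ∀ t : ℝ≥0, MeasurableSet[𝓕 t] {ω | τ ω ≤ (t : ℝ≥0∞)}

/-- `τs` is an announcing sequence for `τ`. -/
def Announces {m : MeasurableSpace Ω} (𝓕 : Filtration ℝ≥0 m) (μ : Measure Ω)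
    (τ : Ω → ℝ≥0∞) (τs : ℕ → Ω → ℝ≥0∞) : Prop :=
  (∀ n, IsStoppingTimeE 𝓕 (τs n)) ∧
  (∀ ω, Monotone fun n => τs n ω) ∧
  (∀ᵐ ω ∂μ, (∀ n, 0 < τ ω → τs n ω < τ ω) ∧
    Tendsto (fun n => τs n ω) atTop (𝓝 (τ ω)))

/-- `τ` is a foretellable time. -/
def Foretellable {m : MeasurableSpace Ω} (𝓕 : Filtration ℝ≥0 m) (μ : Measure Ω)
    (τ : Ω → ℝ≥0∞) : Prop :=
  ∃ τs, Announces 𝓕 μ τ τs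

/-- Extended local integrability of the process `X` on `D`, where `X` is a process on the
stochastic interval `[0,τ)`. -/
def ExtLocIntegrableOn {m : MeasurableSpace Ω} (𝓕 : Filtration ℝ≥0 m) (μ : Measure Ω)
    (τ : Ω → ℝ≥0∞) (X : ℝ≥0 → Ω → ℝ) (D : Set Ω) : Prop :=
  ∃ (ρ : ℕ → Ω → ℝ≥0∞) (Θ : ℕ → Ω → ℝ),
    (∀ n, IsStoppingTimeE 𝓕 (ρ n)) ∧
    (∀ ω, Monotone fun n => ρ n ω) ∧
    (∀ n, Integrable (Θ n) μ) ∧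
    ∀ᵐ ω ∂μ,
      (∀ n, ∀ t : ℝ≥0, (t : ℝ≥0∞) ≤ ρ n ω → (t : ℝ≥0∞) < τ ω → |X t ω| ≤ Θ n ω) ∧
      (ω ∈ D → ∃ n, τ ω ≤ ρ n ω)

/-- Extended local boundedness of the process `X` on `D`, where `X` is a process on the
stochastic interval `[0,τ)`. -/
def ExtLocBoundedOn {m : MeasurableSpace Ω} (𝓕 : Filtration ℝ≥0 m) (μ : Measure Ω)
    (τ : Ω → ℝ≥0∞) (X : ℝ≥0 → Ω → ℝ) (D : Set Ω) : Prop :=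
  ∃ (ρ : ℕ → Ω → ℝ≥0∞) (c : ℕ → ℝ),
    (∀ n, IsStoppingTimeE 𝓕 (ρ n)) ∧
    (∀ ω, Monotone fun n => ρ n ω) ∧
    ∀ᵐ ω ∂μ,
      (∀ n, ∀ t : ℝ≥0, (t : ℝ≥0∞) ≤ ρ n ω → (t : ℝ≥0∞) < τ ω → |X t ω| ≤ c n) ∧
      (ω ∈ D → ∃ n, τ ω ≤ ρ n ω)

/-- The process `X` on `[0,τ)` stopped at the random time `σ`:
`X^σ_t = X_t` for `t < σ`, and `X^σ_t = X_σ · 1_{σ < τ}` for `t ≥ σ`. -/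
noncomputable def stoppedAt (X : ℝ≥0 → Ω → ℝ) (τ σ : Ω → ℝ≥0∞) : ℝ≥0 → Ω → ℝ :=
  fun t ω =>
    if (t : ℝ≥0∞) < σ ω then X t ω
    else if σ ω < τ ω then X (σ ω).toNNReal ω else 0

/-- Right-continuity with left limits of the path `t ↦ X t ω` on `[0, τω)`. -/
def CadlagOn (X : ℝ≥0 → Ω → ℝ) (τω : ℝ≥0∞) (ω : Ω) : Prop :=
  (∀ t : ℝ≥0, (t : ℝ≥0∞) < τω →
    Tendsto (fun s => X s ω) (𝓝[≥] t) (𝓝 (X t ω))) ∧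
  (∀ t : ℝ≥0, 0 < t → (t : ℝ≥0∞) < τω →
    ∃ L : ℝ, Tendsto (fun s => X s ω) (𝓝[<] t) (𝓝 L))

/-- `Δ` is the jump process of `X` on `[0, τω)` along the path of `ω`
(with the convention `ΔX_0 = 0`, i.e. `X_{0-} = X_0`). -/
def HasJumps (X Δ : ℝ≥0 → Ω → ℝ) (τω : ℝ≥0∞) (ω : Ω) : Prop :=
  Δ 0 ω = 0 ∧ ∀ t : ℝ≥0, 0 < t → (t : ℝ≥0∞) < τω →
    Tendsto (fun s => X s ω) (𝓝[<] t) (𝓝 (X t ω - Δ t ω))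

/-- The filter of times `t ↑ τω`, pulled back to `ℝ≥0`; convergence of `t ↦ X t ω` along
`toTau (τ ω)` expresses convergence of `X_t` as `t → τ(ω)` from the left (with `t < τ(ω)`). -/
def toTau (τω : ℝ≥0∞) : Filter ℝ≥0 :=
  Filter.comap (fun t : ℝ≥0 => (t : ℝ≥0∞)) (𝓝[<] τω)


/-! On `[0, σ n] ∩ [0, τ)` the process `X` agrees with its stopped version `X^{σ n}`. So if
`ρ n l` localizes `X^{σ n}` with bounds `Θ n l`, the running maxima
`max_{n, l ≤ k} (σ n ∧ ρ n l)` localize `X` with bounds `∑_{n, l ≤ k} |Θ n l|`; on `D` they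
reach `τ` because some `σ n` does, and then some `ρ n l`. -/

section StoppingTime

variable {m : MeasurableSpace Ω} {𝓕 : Filtration ℝ≥0 m}

lemma IsStoppingTimeE.min {σ ρ : Ω → ℝ≥0∞} (hσ : IsStoppingTimeE 𝓕 σ)
    (hρ : IsStoppingTimeE 𝓕 ρ) : IsStoppingTimeE 𝓕 fun ω => min (σ ω) (ρ ω) := by
  intro t
  simp only [min_le_iff, Set.ofPred_or]
  exact (hσ t).union (hρ t)

lemma IsStoppingTimeE.partialSups {ι : Type*} [Preorder ι] [LocallyFiniteOrderBot ι]
    {ρ : ι → Ω → ℝ≥0∞} (hρ : ∀ i, IsStoppingTimeE 𝓕 (ρ i)) (i : ι) :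
    IsStoppingTimeE 𝓕 fun ω => _root_.partialSups (fun j => ρ j ω) i := by
  intro t
  have hset : {ω | _root_.partialSups (fun j => ρ j ω) i ≤ (t : ℝ≥0∞)} =
      ⋂ j ∈ (Finset.Iic i : Set ι), {ω | ρ j ω ≤ t} := by
    ext ω
    simp
  rw [hset]
  exact MeasurableSet.biInter (Finset.Iic i).countable_toSet fun j _ => hρ j t

end StoppingTime

lemma stoppedAt_of_le {X : ℝ≥0 → Ω → ℝ} {τ σ : Ω → ℝ≥0∞} {t : ℝ≥0} {ω : Ω}
    (hσ : (t : ℝ≥0∞) ≤ σ ω) (hτ : (t : ℝ≥0∞) < τ ω) : stoppedAt X τ σ t ω = X t ω := by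
  rcases hσ.lt_or_eq with hlt | heq
  · simp [stoppedAt, hlt]
  · simp [stoppedAt, ← heq, hτ]

def IsExtLocalizingOn {m : MeasurableSpace Ω} (𝓕 : Filtration ℝ≥0 m) (μ : Measure Ω)
    (τ : Ω → ℝ≥0∞) (X : ℝ≥0 → Ω → ℝ) (D : Set Ω) (ρ : ℕ → Ω → ℝ≥0∞) (Θ : ℕ → Ω → ℝ) :
    Prop :=
  (∀ n, IsStoppingTimeE 𝓕 (ρ n)) ∧
  (∀ ω, Monotone fun n => ρ n ω) ∧
  ∀ᵐ ω ∂μ,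
    (∀ n, ∀ t : ℝ≥0, (t : ℝ≥0∞) ≤ ρ n ω → (t : ℝ≥0∞) < τ ω → |X t ω| ≤ Θ n ω) ∧
    (ω ∈ D → ∃ n, τ ω ≤ ρ n ω)

section Localizing

variable {m : MeasurableSpace Ω} {𝓕 : Filtration ℝ≥0 m} {μ : Measure Ω} {τ : Ω → ℝ≥0∞}
  {X : ℝ≥0 → Ω → ℝ} {D : Set Ω}

lemma extLocIntegrableOn_iff :
    ExtLocIntegrableOn 𝓕 μ τ X D ↔
      ∃ ρ Θ, (∀ n, Integrable (Θ n) μ) ∧ IsExtLocalizingOn 𝓕 μ τ X D ρ Θ := by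
  simp only [ExtLocIntegrableOn, IsExtLocalizingOn]
  tauto

lemma extLocBoundedOn_iff :
    ExtLocBoundedOn 𝓕 μ τ X D ↔ ∃ (ρ : ℕ → Ω → ℝ≥0∞) (c : ℕ → ℝ),
      IsExtLocalizingOn 𝓕 μ τ X D ρ fun n _ => c n :=
  Iff.rfl

lemma isExtLocalizingOn_of_stoppedAt {σs : ℕ → Ω → ℝ≥0∞} (hσs : ∀ n, IsStoppingTimeE 𝓕 (σs n))
    (hσcover : ∀ᵐ ω ∂μ, ω ∈ D → ∃ n, τ ω ≤ σs n ω)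
    {ρ : ℕ → ℕ → Ω → ℝ≥0∞} {Θ : ℕ → ℕ → Ω → ℝ}
    (hρ : ∀ n, IsExtLocalizingOn 𝓕 μ τ (stoppedAt X τ (σs n)) D (ρ n) (Θ n)) :
    IsExtLocalizingOn 𝓕 μ τ X D
      (fun k ω => partialSups (fun p : ℕ × ℕ => min (σs p.1 ω) (ρ p.1 p.2 ω)) (k, k))
      (fun k ω => ∑ p ∈ Finset.Iic (k, k), |Θ p.1 p.2 ω|) := by
  have hmin : ∀ p : ℕ × ℕ, IsStoppingTimeE 𝓕 fun ω => min (σs p.1 ω) (ρ p.1 p.2 ω) :=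
    fun p => (hσs p.1).min ((hρ p.1).1 p.2)
  refine ⟨fun k => IsStoppingTimeE.partialSups hmin (k, k),
    fun ω k l hkl => (partialSups _).monotone (Prod.mk_le_mk.2 ⟨hkl, hkl⟩), ?_⟩
  filter_upwards [hσcover, ae_all_iff.2 fun n => (hρ n).2.2] with ω hσω hρω
  refine ⟨fun k t ht htτ => ?_, fun hωD => ?_⟩
  · obtain ⟨p, hpk, hp⟩ :=
      exists_partialSups_eq (fun p : ℕ × ℕ => min (σs p.1 ω) (ρ p.1 p.2 ω)) (k, k)
    rw [hp, le_min_iff] at ht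
    calc |X t ω| = |stoppedAt X τ (σs p.1) t ω| := by rw [stoppedAt_of_le ht.1 htτ]
      _ ≤ Θ p.1 p.2 ω := (hρω p.1).1 p.2 t ht.2 htτ
      _ ≤ |Θ p.1 p.2 ω| := le_abs_self _
      _ ≤ ∑ q ∈ Finset.Iic (k, k), |Θ q.1 q.2 ω| :=
        Finset.single_le_sum (f := fun q => |Θ q.1 q.2 ω|) (fun _ _ => abs_nonneg _)
          (Finset.mem_Iic.2 hpk)
  · obtain ⟨n, hn⟩ := hσω hωD
    obtain ⟨l, hl⟩ := (hρω n).2 hωD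
    refine ⟨max n l, (le_min hn hl).trans ?_⟩
    exact le_partialSups_of_le (fun p : ℕ × ℕ => min (σs p.1 ω) (ρ p.1 p.2 ω))
      (Prod.mk_le_mk.2 ⟨le_max_left n l, le_max_right n l⟩)

end Localizing

theorem extLoc_of_stopped_general {m : MeasurableSpace Ω} (𝓕 : Filtration ℝ≥0 m) (μ : Measure Ω)
    (τ : Ω → ℝ≥0∞) (D : Set Ω) (X : ℝ≥0 → Ω → ℝ) (σs : ℕ → Ω → ℝ≥0∞)
    (hσs : ∀ n, IsStoppingTimeE 𝓕 (σs n))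
    (hσcover : ∀ᵐ ω ∂μ, ω ∈ D → ∃ n, τ ω ≤ σs n ω) :
    ((∀ n, ExtLocIntegrableOn 𝓕 μ τ (stoppedAt X τ (σs n)) D) →
      ExtLocIntegrableOn 𝓕 μ τ X D) ∧
    ((∀ n, ExtLocBoundedOn 𝓕 μ τ (stoppedAt X τ (σs n)) D) →
      ExtLocBoundedOn 𝓕 μ τ X D) := by
  simp only [extLocIntegrableOn_iff, extLocBoundedOn_iff]
  refine ⟨fun h => ?_, fun h => ?_⟩
  · choose ρ Θ hΘ hρ using h
    exact ⟨_, _, fun k => integrable_finsetSum _ fun p _ => (hΘ p.1 p.2).abs,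
      isExtLocalizingOn_of_stoppedAt hσs hσcover hρ⟩
  · choose ρ c hρ using h
    exact ⟨_, fun k => ∑ p ∈ Finset.Iic (k, k), |c p.1 p.2|,
      isExtLocalizingOn_of_stoppedAt hσs hσcover hρ⟩

/-- **Extended localization of extended localization.** If there is a nondecreasing sequence
`(σs n)` of stopping times with `D ⊆ ⋃ n {σs n ≥ τ}` a.s. such that each stopped process
`X^{σs n}` is extended locally integrable (bounded) on `D`, then `X` is extended locally
integrable (bounded) on `D`. -/
theorem extLoc_of_stopped {m : MeasurableSpace Ω} (𝓕 : Filtration ℝ≥0 m) (μ : Measure Ω)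
    [IsProbabilityMeasure μ] (τ : Ω → ℝ≥0∞) (hτ : Foretellable 𝓕 μ τ)
    (D : Set Ω) (hD : MeasurableSet D)
    (X : ℝ≥0 → Ω → ℝ) (hXmeas : Measurable (Function.uncurry X))
    (σs : ℕ → Ω → ℝ≥0∞)
    (hσs : ∀ n, IsStoppingTimeE 𝓕 (σs n))
    (hσmono : ∀ ω, Monotone fun n => σs n ω)
    (hσcover : ∀ᵐ ω ∂μ, ω ∈ D → ∃ n, τ ω ≤ σs n ω) :
    ((∀ n, ExtLocIntegrableOn 𝓕 μ τ (stoppedAt X τ (σs n)) D) →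
      ExtLocIntegrableOn 𝓕 μ τ X D) ∧
    ((∀ n, ExtLocBoundedOn 𝓕 μ τ (stoppedAt X τ (σs n)) D) →
      ExtLocBoundedOn 𝓕 μ τ X D) :=
  extLoc_of_stopped_general 𝓕 μ τ D X σs hσs hσcover

end PaperStmt
end

section
/- Let (p_n)_{n≥1} be real numbers with p_n ∈ (0,1) and Σ_{n=1}^∞ p_n < ∞, let (x_n)_{n≥1} be real numbers, and let (Θ_n)_{n≥1} be independent random variables with P(Θ_n = 1) = p_n and P(Θ_n = 0) = 1 − p_n. Set M_m = Σ_{n=1}^m x_n (1 − Θ_n/p_n). Then, almost surely, lim_{m→∞} M_m exists in ℝ if and only if the deterministic series Σ_{n=1}^∞ x_n converges in ℝ. -/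
open MeasureTheory Filter Set Finset
open scoped ENNReal Topology

/-! Since `∑ P(Θ n ≠ 0) = ∑ p n < ∞`, Borel–Cantelli gives, almost surely, `Θ n = 0` for all large
`n`. For such `ω` the increments of `M` eventually equal `x n`, so `M m` and `∑_{n<m} x n` differ
eventually by a constant, and one converges iff the other does. -/

section PartialSums

variable {G : Type*} [AddCommGroup G] {f g : ℕ → G}

theorem exists_partialSums_eventuallyEq_add_const (h : f =ᶠ[atTop] g) :
    ∃ c, (fun m => ∑ n ∈ range m, f n) =ᶠ[atTop] fun m => ∑ n ∈ range m, g n + c := by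
  obtain ⟨N, hN⟩ := eventually_atTop.mp h
  refine ⟨∑ n ∈ range N, (f n - g n), eventually_atTop.mpr ⟨N, fun m hm => ?_⟩⟩
  have hdiff : ∑ n ∈ range m, (f n - g n) = ∑ n ∈ range N, (f n - g n) := by
    refine (sum_subset (range_subset_range.mpr hm) fun n _ hn => ?_).symm
    rw [hN n (not_lt.mp (mem_range.not.mp hn)), sub_self]
  simp only [← hdiff, sum_sub_distrib, add_sub_cancel]

variable [TopologicalSpace G] [ContinuousAdd G]

theorem exists_tendsto_partialSums_of_eventuallyEq (h : f =ᶠ[atTop] g)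
    (hg : ∃ L, Tendsto (fun m => ∑ n ∈ range m, g n) atTop (𝓝 L)) :
    ∃ L, Tendsto (fun m => ∑ n ∈ range m, f n) atTop (𝓝 L) := by
  obtain ⟨c, hc⟩ := exists_partialSums_eventuallyEq_add_const h
  obtain ⟨L, hL⟩ := hg
  exact ⟨L + c, (hL.add_const c).congr' hc.symm⟩

theorem exists_tendsto_partialSums_iff_of_eventuallyEq (h : f =ᶠ[atTop] g) :
    (∃ L, Tendsto (fun m => ∑ n ∈ range m, f n) atTop (𝓝 L)) ↔
      ∃ L, Tendsto (fun m => ∑ n ∈ range m, g n) atTop (𝓝 L) :=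
  ⟨exists_tendsto_partialSums_of_eventuallyEq h.symm,
    exists_tendsto_partialSums_of_eventuallyEq h⟩

end PartialSums

section BorelCantelli

variable {Ω : Type*} {mΩ : MeasurableSpace Ω} {μ : Measure Ω} [IsProbabilityMeasure μ]
  {p : ℕ → ℝ} {Θ : ℕ → Ω → ℝ} {n : ℕ}

theorem measure_ne_zero_eq_ofReal (hp : p n ≤ 1) (hΘ : Measurable (Θ n))
    (h0 : μ {ω | Θ n ω = 0} = ENNReal.ofReal (1 - p n)) :
    μ {ω | Θ n ω ≠ 0} = ENNReal.ofReal (p n) := by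
  have hzero : MeasurableSet {ω | Θ n ω = 0} := hΘ (measurableSet_singleton 0)
  change μ {ω | Θ n ω = 0}ᶜ = _
  rw [prob_compl_eq_one_sub hzero, h0, ← ENNReal.ofReal_one,
    ← ENNReal.ofReal_sub _ (sub_nonneg.mpr hp), sub_sub_cancel]

theorem ae_eventually_eq_zero_of_summable (hpsum : Summable p) (hp : ∀ n, p n ≤ 1)
    (hΘ : ∀ n, Measurable (Θ n)) (h0 : ∀ n, μ {ω | Θ n ω = 0} = ENNReal.ofReal (1 - p n)) :
    ∀ᵐ ω ∂μ, ∀ᶠ n in atTop, Θ n ω = 0 := by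
  have hfinite : ∑' n, μ {ω | Θ n ω ≠ 0} ≠ ∞ := by
    simp_rw [measure_ne_zero_eq_ofReal (hp _) (hΘ _) (h0 _)]
    exact ENNReal.tsum_coe_ne_top_iff_summable.mpr hpsum.toNNReal
  filter_upwards [ae_eventually_notMem hfinite] with ω hω
  simpa using hω

end BorelCantelli

theorem randomWalk_convergence_iff_general
    {Ω : Type*} {mΩ : MeasurableSpace Ω} (μ : Measure Ω) [IsProbabilityMeasure μ]
    (p x : ℕ → ℝ) (hp : ∀ n, 0 < p n ∧ p n < 1) (hpsum : Summable p)
    (Θ : ℕ → Ω → ℝ) (hΘmeas : ∀ n, Measurable (Θ n))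
    (h0 : ∀ n, μ {ω | Θ n ω = 0} = ENNReal.ofReal (1 - p n)) :
    ∀ᵐ ω ∂μ,
      ((∃ L : ℝ, Tendsto (fun m => ∑ n ∈ Finset.range m, x n * (1 - Θ n ω / p n))
          atTop (𝓝 L)) ↔
        (∃ S : ℝ, Tendsto (fun m => ∑ n ∈ Finset.range m, x n) atTop (𝓝 S))) := by
  filter_upwards [ae_eventually_eq_zero_of_summable hpsum (fun n => (hp n).2.le) hΘmeas h0]
    with ω hω
  refine exists_tendsto_partialSums_iff_of_eventuallyEq (hω.mono fun n hn => ?_)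
  simp [hn]

/-- **Random walk with large jumps: convergence.** Let `p n ∈ (0,1)` with `∑ p n < ∞`, let
`(x n)` be reals, and let `(Θ n)` be independent random variables with `P(Θ n = 1) = p n` and
`P(Θ n = 0) = 1 - p n`. Set `M m = ∑_{n<m} x n (1 - Θ n / p n)`. Then, almost surely,
`lim_m M m` exists in `ℝ` if and only if the deterministic series `∑ x n` converges. -/
theorem randomWalk_convergence_iff
    {Ω : Type*} {mΩ : MeasurableSpace Ω} (μ : Measure Ω) [IsProbabilityMeasure μ]
    (p x : ℕ → ℝ) (hp : ∀ n, 0 < p n ∧ p n < 1) (hpsum : Summable p)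
    (Θ : ℕ → Ω → ℝ) (hΘmeas : ∀ n, Measurable (Θ n))
    (hindep : ProbabilityTheory.iIndepFun Θ μ)
    (h1 : ∀ n, μ {ω | Θ n ω = 1} = ENNReal.ofReal (p n))
    (h0 : ∀ n, μ {ω | Θ n ω = 0} = ENNReal.ofReal (1 - p n)) :
    ∀ᵐ ω ∂μ,
      ((∃ L : ℝ, Tendsto (fun m => ∑ n ∈ Finset.range m, x n * (1 - Θ n ω / p n))
          atTop (𝓝 L)) ↔
        (∃ S : ℝ, Tendsto (fun m => ∑ n ∈ Finset.range m, x n) atTop (𝓝 S))) :=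
  randomWalk_convergence_iff_general (mΩ := mΩ) μ p x hp hpsum Θ hΘmeas h0
end

section
/- Let (p_n)_{n≥1} be real numbers with p_n ∈ (0,1) and Σ_{n=1}^∞ p_n < ∞, let (x_n)_{n≥1} be real numbers, and let (Θ_n)_{n≥1} be independent random variables with P(Θ_n = 1) = p_n and P(Θ_n = 0) = 1 − p_n. Then, almost surely, Σ_{n=1}^∞ x_n² (1 − Θ_n/p_n)² < ∞ if and only if Σ_{n=1}^∞ x_n² < ∞. (The left-hand series is the quadratic variation at infinity of the piecewise constant martingale with jumps x_n(1 − Θ_n/p_n).) -/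
open MeasureTheory Filter Set
open scoped ENNReal

/-! By Borel–Cantelli, `∑ P(Θ n ≠ 0) = ∑ p n < ∞` forces `Θ n ω = 0` for all large `n`, almost
surely. For such `ω` the two series agree term by term from some index on. -/

theorem measure_setOf_ne_eq_ofReal {Ω α : Type*} {mΩ : MeasurableSpace Ω} {μ : Measure Ω}
    [IsProbabilityMeasure μ] [MeasurableSpace α] [MeasurableSingletonClass α] {f : Ω → α}
    (hf : Measurable f) {a : α} {q : ℝ} (hq : q ≤ 1)
    (h : μ {ω | f ω = a} = ENNReal.ofReal (1 - q)) :
    μ {ω | f ω ≠ a} = ENNReal.ofReal q := by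
  have hmeas : MeasurableSet {ω | f ω = a} := hf (measurableSet_singleton a)
  rw [← compl_ofPred, prob_compl_eq_one_sub hmeas, h, ← ENNReal.ofReal_one,
    ← ENNReal.ofReal_sub _ (by linarith), sub_sub_cancel]

theorem ae_eventually_eq_of_summable {Ω α : Type*} {mΩ : MeasurableSpace Ω} {μ : Measure Ω}
    {f : ℕ → Ω → α} {a : α} {q : ℕ → ℝ} (hq : Summable q)
    (hμ : ∀ n, μ {ω | f n ω ≠ a} ≤ ENNReal.ofReal (q n)) :
    ∀ᵐ ω ∂μ, ∀ᶠ n in atTop, f n ω = a := by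
  have hfinite : ∑' n, μ {ω | f n ω ≠ a} ≠ ∞ :=
    ne_top_of_le_ne_top hq.tsum_ofReal_ne_top (ENNReal.tsum_le_tsum hμ)
  filter_upwards [ae_eventually_notMem hfinite] with ω hω
  simpa using hω

theorem randomWalk_quadraticVariation_iff_general
    {Ω : Type*} {mΩ : MeasurableSpace Ω} (μ : Measure Ω) [IsProbabilityMeasure μ]
    (p x : ℕ → ℝ) (hp : ∀ n, 0 < p n ∧ p n < 1) (hpsum : Summable p)
    (Θ : ℕ → Ω → ℝ) (hΘmeas : ∀ n, Measurable (Θ n))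
    (h0 : ∀ n, μ {ω | Θ n ω = 0} = ENNReal.ofReal (1 - p n)) :
    ∀ᵐ ω ∂μ,
      (Summable (fun n => (x n * (1 - Θ n ω / p n)) ^ 2) ↔
        Summable (fun n => (x n) ^ 2)) := by
  have hμ n : μ {ω | Θ n ω ≠ 0} ≤ ENNReal.ofReal (p n) :=
    (measure_setOf_ne_eq_ofReal (hΘmeas n) (hp n).2.le (h0 n)).le
  filter_upwards [ae_eventually_eq_of_summable hpsum hμ] with ω hω
  exact summable_congr_atTop (hω.mono fun n hn => by simp [hn])

/-- **Random walk with large jumps: quadratic variation.** Let `p n ∈ (0,1)` with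
`∑ p n < ∞`, let `(x n)` be reals, and let `(Θ n)` be independent random variables with
`P(Θ n = 1) = p n` and `P(Θ n = 0) = 1 - p n`. Then, almost surely,
`∑ n (x n)² (1 - Θ n / p n)² < ∞` if and only if `∑ n (x n)² < ∞`. -/
theorem randomWalk_quadraticVariation_iff
    {Ω : Type*} {mΩ : MeasurableSpace Ω} (μ : Measure Ω) [IsProbabilityMeasure μ]
    (p x : ℕ → ℝ) (hp : ∀ n, 0 < p n ∧ p n < 1) (hpsum : Summable p)
    (Θ : ℕ → Ω → ℝ) (hΘmeas : ∀ n, Measurable (Θ n))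
    (hindep : ProbabilityTheory.iIndepFun Θ μ)
    (h1 : ∀ n, μ {ω | Θ n ω = 1} = ENNReal.ofReal (p n))
    (h0 : ∀ n, μ {ω | Θ n ω = 0} = ENNReal.ofReal (1 - p n)) :
    ∀ᵐ ω ∂μ,
      (Summable (fun n => (x n * (1 - Θ n ω / p n)) ^ 2) ↔
        Summable (fun n => (x n) ^ 2)) :=
  randomWalk_quadraticVariation_iff_general (mΩ := mΩ) μ p x hp hpsum Θ hΘmeas h0
end

section
/- Let (p_n)_{n≥1} be real numbers with p_n ∈ (0,1) and Σ_{n=1}^∞ p_n < ∞, let (x_n)_{n≥1} be real numbers with Σ_{n=1}^∞ |x_n| = ∞, and let (Θ_n)_{n≥1} be independent random variables with P(Θ_n = 1) = p_n and P(Θ_n = 0) = 1 − p_n. Then, almost surely, Σ_{n=1}^m |x_n| (1 − Θ_n/p_n) → +∞ as m → ∞. (Consequently the martingale M_m = Σ_{n=1}^m x_n(1 − Θ_n/p_n) is not a semimartingale on the closed time interval [0,∞]: integrating the bounded predictable integrand sign(x_n) against it produces a divergent process.) -/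
open MeasureTheory Filter Set Finset
open scoped ENNReal Topology

/-! By Borel–Cantelli, `∑ P(Θ n = 1) = ∑ p n < ∞` forces `Θ n = 0` for all large `n`, almost
surely. From then on the summands are just `|x n|`, so the partial sums differ from those of the
divergent series `∑ |x n|` by a constant. -/

theorem tendsto_sum_range_atTop_of_eventuallyEq {G : Type*} [AddCommGroup G] [PartialOrder G]
    [IsOrderedAddMonoid G] {f g : ℕ → G} (hfg : f =ᶠ[atTop] g)
    (hg : Tendsto (fun m => ∑ n ∈ range m, g n) atTop atTop) :
    Tendsto (fun m => ∑ n ∈ range m, f n) atTop atTop := by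
  obtain ⟨N, hN⟩ := eventually_atTop.1 hfg
  have hshift : ∀ m ≥ N, ∑ n ∈ range m, f n = ∑ n ∈ range m, g n + ∑ n ∈ range N, (f n - g n) :=
    fun m hm => by
      rw [← eventually_constant_sum (fun n hn => sub_eq_zero.2 (hN n hn)) hm, sum_sub_distrib,
        add_sub_cancel]
  refine (tendsto_atTop_add_const_right _ (∑ n ∈ range N, (f n - g n)) hg).congr' ?_
  filter_upwards [eventually_ge_atTop N] with m hm using (hshift m hm).symm

theorem ae_eq_or_eq_of_one_le_measure_add {Ω β : Type*} {mΩ : MeasurableSpace Ω}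
    [MeasurableSpace β] [MeasurableSingletonClass β] {μ : Measure Ω} [IsProbabilityMeasure μ]
    {f : Ω → β} (hf : Measurable f) {a b : β} (hab : a ≠ b)
    (h : 1 ≤ μ {ω | f ω = a} + μ {ω | f ω = b}) :
    ∀ᵐ ω ∂μ, f ω = a ∨ f ω = b := by
  have ha : MeasurableSet {ω | f ω = a} := hf (measurableSet_singleton a)
  have hb : MeasurableSet {ω | f ω = b} := hf (measurableSet_singleton b)
  have hdisj : Disjoint {ω | f ω = a} {ω | f ω = b} :=
    Set.disjoint_left.2 fun ω hωa hωb => hab (hωa.symm.trans hωb)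
  have hmeas : MeasurableSet {ω | f ω = a ∨ f ω = b} := ha.union hb
  rw [ae_iff_measure_eq hmeas.nullMeasurableSet, measure_univ]
  exact le_antisymm prob_le_one (h.trans (measure_union hdisj hb).ge)

theorem ae_eventually_eq_of_tsum_measure_ne_top {Ω β : Type*} {mΩ : MeasurableSpace Ω}
    {μ : Measure Ω} {f : ℕ → Ω → β} {a b : β} (hfab : ∀ᵐ ω ∂μ, ∀ n, f n ω = a ∨ f n ω = b)
    (hsum : ∑' n, μ {ω | f n ω = a} ≠ ∞) :
    ∀ᵐ ω ∂μ, ∀ᶠ n in atTop, f n ω = b := by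
  filter_upwards [hfab, ae_eventually_notMem hsum] with ω hω hev
  exact hev.mono fun n hn => (hω n).resolve_left hn

theorem randomWalk_divergence_general
    {Ω : Type*} {mΩ : MeasurableSpace Ω} (μ : Measure Ω) [IsProbabilityMeasure μ]
    (p x : ℕ → ℝ) (hp : ∀ n, 0 < p n ∧ p n < 1) (hpsum : Summable p)
    (hxdiv : ¬ Summable (fun n => |x n|))
    (Θ : ℕ → Ω → ℝ) (hΘmeas : ∀ n, Measurable (Θ n))
    (h1 : ∀ n, μ {ω | Θ n ω = 1} = ENNReal.ofReal (p n))
    (h0 : ∀ n, μ {ω | Θ n ω = 0} = ENNReal.ofReal (1 - p n)) :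
    ∀ᵐ ω ∂μ,
      Tendsto (fun m => ∑ n ∈ Finset.range m, |x n| * (1 - Θ n ω / p n)) atTop atTop := by
  have hΘ01 : ∀ᵐ ω ∂μ, ∀ n, Θ n ω = 1 ∨ Θ n ω = 0 := ae_all_iff.2 fun n =>
    ae_eq_or_eq_of_one_le_measure_add (hΘmeas n) one_ne_zero <| by
      rw [h1, h0, ← ENNReal.ofReal_one]
      exact (ENNReal.ofReal_le_ofReal (by linarith)).trans ENNReal.ofReal_add_le
  have hsum : ∑' n, μ {ω | Θ n ω = 1} ≠ ∞ := by
    simp_rw [h1, ← ENNReal.ofReal_tsum_of_nonneg (fun n => (hp n).1.le) hpsum]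
    exact ENNReal.ofReal_ne_top
  have hx : Tendsto (fun m => ∑ n ∈ range m, |x n|) atTop atTop :=
    (not_summable_iff_tendsto_nat_atTop_of_nonneg fun n => abs_nonneg (x n)).1 hxdiv
  filter_upwards [ae_eventually_eq_of_tsum_measure_ne_top hΘ01 hsum] with ω hω
  exact tendsto_sum_range_atTop_of_eventuallyEq (hω.mono fun n hn => by simp [hn]) hx

/-- **Random walk with large jumps: divergence under non-absolute-summability.** Let
`p n ∈ (0,1)` with `∑ p n < ∞`, let `(x n)` be reals with `∑ |x n| = ∞`, and let `(Θ n)` be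
independent random variables with `P(Θ n = 1) = p n` and `P(Θ n = 0) = 1 - p n`. Then, almost
surely, `∑_{n<m} |x n| (1 - Θ n / p n) → +∞` as `m → ∞`. -/
theorem randomWalk_divergence
    {Ω : Type*} {mΩ : MeasurableSpace Ω} (μ : Measure Ω) [IsProbabilityMeasure μ]
    (p x : ℕ → ℝ) (hp : ∀ n, 0 < p n ∧ p n < 1) (hpsum : Summable p)
    (hxdiv : ¬ Summable (fun n => |x n|))
    (Θ : ℕ → Ω → ℝ) (hΘmeas : ∀ n, Measurable (Θ n))
    (hindep : ProbabilityTheory.iIndepFun Θ μ)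
    (h1 : ∀ n, μ {ω | Θ n ω = 1} = ENNReal.ofReal (p n))
    (h0 : ∀ n, μ {ω | Θ n ω = 0} = ENNReal.ofReal (1 - p n)) :
    ∀ᵐ ω ∂μ,
      Tendsto (fun m => ∑ n ∈ Finset.range m, |x n| * (1 - Θ n ω / p n)) atTop atTop :=
  randomWalk_divergence_general (mΩ := mΩ) μ p x hp hpsum hxdiv Θ hΘmeas h1 h0
end

section
/- Let Θ be a standard exponential random variable, and let λ, γ : [0,∞) → [0,∞) be continuous functions satisfying ∫_0^∞ λ(s) ds < ∞ and ∫_0^∞ γ(s) λ(s) ds = ∞. Define ρ = inf{ t ≥ 0 : ∫_0^t λ(s) ds ≥ Θ } (inf ∅ = ∞) and X_t = γ(ρ)·1_{ρ ≤ t} − ∫_0^t γ(s) λ(s) 1_{s < ρ} ds. Then: (i) P(ρ = ∞) = exp( −∫_0^∞ λ(s) ds ) > 0; (ii) almost surely, sup_{t ≥ 0} X_t < ∞; and (iii) on the event {ρ = ∞} one has lim_{t→∞} X_t = −∞, hence P( limsup_{t→∞} X_t = −∞ ) ≥ exp( −∫_0^∞ λ(s) ds ) > 0. -/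
/-!
The event `{ρ = ∞}` is `{Θ > Λ(t) for all t}`, where `Λ(t) = ∫_0^t λ` increases to
`Λ(∞) < ∞`; it is therefore squeezed between `{Θ > Λ(∞)}` and `{Θ ≥ Λ(∞)}`, and both have
probability `exp (-Λ(∞))` because the exponential tail is continuous. Since `γ λ ≥ 0`, the
compensator `∫_0^t γ λ 1_{s < ρ}` is nonnegative, so `X_t ≤ γ(ρ)` pathwise. On `{ρ = ∞}` the
process is minus the full compensator `∫_0^t γ λ`, which diverges because `∫_0^∞ γ λ = ∞`.
-/

open MeasureTheory Filter Set
open scoped ENNReal NNReal Topology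

namespace PaperStmt

variable {Ω : Type*}

/-- The cumulative hazard `Λ(t) = ∫_0^t λ(s) ds`. -/
noncomputable def cumHazard (l : ℝ → ℝ) (t : ℝ) : ℝ := ∫ s in (0 : ℝ)..t, l s

/-- The Cox construction: `ρ = inf{t ≥ 0 : ∫_0^t λ(s) ds ≥ Θ}`, with `inf ∅ = ∞`. -/
noncomputable def coxTime (l : ℝ → ℝ) (Θ : Ω → ℝ) (ω : Ω) : ℝ≥0∞ :=
  ⨅ (t : ℝ≥0) (_ : Θ ω ≤ cumHazard l t), (t : ℝ≥0∞)

/-- The process `X_t = γ(ρ)·1_{ρ ≤ t} - ∫_0^t γ(s) λ(s) 1_{s < ρ} ds`. -/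
noncomputable def coxProcess (l g : ℝ → ℝ) (Θ : Ω → ℝ) : ℝ≥0 → Ω → ℝ :=
  fun t ω =>
    (if coxTime l Θ ω ≤ (t : ℝ≥0∞) then g (coxTime l Θ ω).toReal else 0)
      - ∫ s in (0 : ℝ)..(t : ℝ),
          Set.indicator {s : ℝ | ENNReal.ofReal s < coxTime l Θ ω} (fun s => g s * l s) s

theorem measure_le_eq_of_measure_lt_eq_exp {mΩ : MeasurableSpace Ω} {μ : Measure Ω}
    [IsProbabilityMeasure μ] {Θ : Ω → ℝ}
    (hΘexp : ∀ u : ℝ, 0 ≤ u → μ {ω | u < Θ ω} = ENNReal.ofReal (Real.exp (-u)))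
    {u : ℝ} (hu : 0 ≤ u) : μ {ω | u ≤ Θ ω} = ENNReal.ofReal (Real.exp (-u)) := by
  refine le_antisymm ?_ (hΘexp u hu ▸ measure_mono fun _ (hω : u < _) => hω.le)
  rcases hu.eq_or_lt with rfl | hu
  · simpa using prob_le_one
  have hcont : Tendsto (fun v => ENNReal.ofReal (Real.exp (-v))) (𝓝[<] u)
      (𝓝 (ENNReal.ofReal (Real.exp (-u)))) :=
    tendsto_nhdsWithin_of_tendsto_nhds (ENNReal.continuous_ofReal.comp
      (Real.continuous_exp.comp continuous_neg)).continuousAt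
  refine ge_of_tendsto hcont ?_
  filter_upwards [Ioo_mem_nhdsLT hu] with v hv
  rw [← hΘexp v hv.1.le]
  exact measure_mono fun ω hω => lt_of_lt_of_le hv.2 hω

theorem tendsto_intervalIntegral_atTop_of_lintegral_Ioi_eq_top {f : ℝ → ℝ}
    (hf : ContinuousOn f (Ici 0)) (hf0 : ∀ s, 0 < s → 0 ≤ f s)
    (hdiv : ∫⁻ s in Ioi (0 : ℝ), ENNReal.ofReal (f s) = ∞) :
    Tendsto (fun t => ∫ s in (0 : ℝ)..t, f s) atTop atTop := by
  have hmeas : AEMeasurable (fun s => ENNReal.ofReal (f s)) (volume.restrict (Ioi 0)) :=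
    ((hf.aestronglyMeasurable measurableSet_Ici).mono_measure
      (Measure.restrict_mono Ioi_subset_Ici_self le_rfl)).aemeasurable.ennreal_ofReal
  have hlim := (aecover_Iic (μ := volume.restrict (Ioi (0 : ℝ))) tendsto_id)
    |>.lintegral_tendsto_of_countably_generated hmeas
  rw [hdiv] at hlim
  refine ENNReal.tendsto_ofReal_nhds_top.1 (hlim.congr' ?_)
  filter_upwards [eventually_ge_atTop 0] with t ht
  rw [id_eq, Measure.restrict_restrict measurableSet_Iic, Iic_inter_Ioi,
    intervalIntegral.integral_of_le ht, ofReal_integral_eq_lintegral_ofReal]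
  · exact ((hf.mono Icc_subset_Ici_self).integrableOn_Icc).mono_set Ioc_subset_Icc_self
  · exact (ae_restrict_iff' measurableSet_Ioc).2 (ae_of_all _ fun s hs => hf0 s hs.1)

section

variable {l g : ℝ → ℝ} {Θ : Ω → ℝ} {ω : Ω}

theorem cumHazard_le_integral_Ioi (hl0 : ∀ s, 0 < s → 0 ≤ l s)
    (hlint : IntegrableOn l (Ioi 0)) {t : ℝ} (ht : 0 ≤ t) :
    cumHazard l t ≤ ∫ s in Ioi (0 : ℝ), l s := by
  rw [cumHazard, intervalIntegral.integral_of_le ht]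
  exact setIntegral_mono_set hlint ((ae_restrict_iff' measurableSet_Ioi).2 (ae_of_all _ hl0))
    Ioc_subset_Ioi_self.eventuallyLE

theorem tendsto_cumHazard (hlint : IntegrableOn l (Ioi 0)) :
    Tendsto (cumHazard l) atTop (𝓝 (∫ s in Ioi (0 : ℝ), l s)) :=
  intervalIntegral_tendsto_integral_Ioi 0 hlint tendsto_id

theorem coxTime_eq_top_iff : coxTime l Θ ω = ∞ ↔ ∀ t : ℝ≥0, cumHazard l t < Θ ω := by
  simp [coxTime, iInf_eq_top]

theorem coxTime_eq_top_of_integral_lt (hl0 : ∀ s, 0 < s → 0 ≤ l s)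
    (hlint : IntegrableOn l (Ioi 0))
    (h : ∫ s in Ioi (0 : ℝ), l s < Θ ω) : coxTime l Θ ω = ∞ :=
  coxTime_eq_top_iff.2 fun t => (cumHazard_le_integral_Ioi hl0 hlint t.coe_nonneg).trans_lt h

theorem integral_le_of_coxTime_eq_top (hlint : IntegrableOn l (Ioi 0)) (h : coxTime l Θ ω = ∞) :
    ∫ s in Ioi (0 : ℝ), l s ≤ Θ ω := by
  refine le_of_tendsto (tendsto_cumHazard hlint) ?_
  filter_upwards [eventually_ge_atTop 0] with t ht
  exact (coxTime_eq_top_iff.1 h ⟨t, ht⟩).le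

theorem measure_coxTime_eq_top {mΩ : MeasurableSpace Ω} {μ : Measure Ω}
    [IsProbabilityMeasure μ]
    (hΘexp : ∀ u : ℝ, 0 ≤ u → μ {ω | u < Θ ω} = ENNReal.ofReal (Real.exp (-u)))
    (hl0 : ∀ s, 0 < s → 0 ≤ l s) (hlint : IntegrableOn l (Ioi 0)) :
    μ {ω | coxTime l Θ ω = ∞} = ENNReal.ofReal (Real.exp (-∫ s in Ioi (0 : ℝ), l s)) := by
  have hL : 0 ≤ ∫ s in Ioi (0 : ℝ), l s := setIntegral_nonneg measurableSet_Ioi hl0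
  refine le_antisymm ?_ ?_
  · rw [← measure_le_eq_of_measure_lt_eq_exp hΘexp hL]
    exact measure_mono fun ω => integral_le_of_coxTime_eq_top hlint
  · rw [← hΘexp _ hL]
    exact measure_mono fun ω => coxTime_eq_top_of_integral_lt hl0 hlint

theorem coxProcess_le_of_nonneg (hl0 : ∀ s, 0 ≤ s → 0 ≤ l s) (hg0 : ∀ s, 0 ≤ s → 0 ≤ g s)
    (t : ℝ≥0) : coxProcess l g Θ t ω ≤ g (coxTime l Θ ω).toReal := by
  have hcomp : 0 ≤ ∫ s in (0 : ℝ)..(t : ℝ),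
      Set.indicator {s : ℝ | ENNReal.ofReal s < coxTime l Θ ω} (fun s => g s * l s) s :=
    intervalIntegral.integral_nonneg t.coe_nonneg fun s hs =>
      indicator_apply_nonneg fun _ => mul_nonneg (hg0 s hs.1) (hl0 s hs.1)
  have hjump : 0 ≤ g (coxTime l Θ ω).toReal := hg0 _ ENNReal.toReal_nonneg
  unfold coxProcess
  split_ifs <;> linarith

theorem coxProcess_of_coxTime_eq_top (h : coxTime l Θ ω = ∞) (t : ℝ≥0) :
    coxProcess l g Θ t ω = -∫ s in (0 : ℝ)..(t : ℝ), g s * l s := by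
  simp [coxProcess, h]

theorem tendsto_coxProcess_atBot_of_coxTime_eq_top (hl : ContinuousOn l (Ici 0))
    (hg : ContinuousOn g (Ici 0)) (hl0 : ∀ s, 0 < s → 0 ≤ l s) (hg0 : ∀ s, 0 < s → 0 ≤ g s)
    (hgldiv : ∫⁻ s in Ioi (0 : ℝ), ENNReal.ofReal (g s * l s) = ∞)
    (h : coxTime l Θ ω = ∞) :
    Tendsto (fun t : ℝ≥0 => coxProcess l g Θ t ω) atTop atBot := by
  simp only [coxProcess_of_coxTime_eq_top h]
  exact tendsto_neg_atTop_atBot.comp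
    ((tendsto_intervalIntegral_atTop_of_lintegral_Ioi_eq_top (hg.mul hl)
      (fun s hs => mul_nonneg (hg0 s hs) (hl0 s hs)) hgldiv).comp
      (NNReal.tendsto_coe_atTop.2 tendsto_id))

end

theorem coxProcess_bounded_and_divergent_general {mΩ : MeasurableSpace Ω} (μ : Measure Ω)
    [IsProbabilityMeasure μ]
    (Θ : Ω → ℝ)
    (hΘexp : ∀ u : ℝ, 0 ≤ u → μ {ω | u < Θ ω} = ENNReal.ofReal (Real.exp (-u)))
    (l g : ℝ → ℝ) (hl : ContinuousOn l (Ici 0)) (hg : ContinuousOn g (Ici 0))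
    (hl0 : ∀ s, 0 ≤ s → 0 ≤ l s) (hg0 : ∀ s, 0 ≤ s → 0 ≤ g s)
    (hlint : IntegrableOn l (Ioi 0) volume)
    (hgldiv : ∫⁻ s in Ioi (0 : ℝ), ENNReal.ofReal (g s * l s) = ∞) :
    (μ {ω | coxTime l Θ ω = ∞} = ENNReal.ofReal (Real.exp (-∫ s in Ioi (0 : ℝ), l s)) ∧
      0 < μ {ω | coxTime l Θ ω = ∞}) ∧
    (∀ᵐ ω ∂μ, ∃ C : ℝ, ∀ t : ℝ≥0, coxProcess l g Θ t ω ≤ C) ∧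
    (∀ᵐ ω ∂μ, coxTime l Θ ω = ∞ →
      Tendsto (fun t : ℝ≥0 => coxProcess l g Θ t ω) atTop atBot) ∧
    ENNReal.ofReal (Real.exp (-∫ s in Ioi (0 : ℝ), l s)) ≤
      μ {ω | Tendsto (fun t : ℝ≥0 => coxProcess l g Θ t ω) atTop atBot} := by
  have hl0' : ∀ s, 0 < s → 0 ≤ l s := fun s hs => hl0 s hs.le
  have hsurvival := measure_coxTime_eq_top hΘexp hl0' hlint
  have hdiverge : ∀ ω, coxTime l Θ ω = ∞ →
      Tendsto (fun t : ℝ≥0 => coxProcess l g Θ t ω) atTop atBot := fun ω =>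
    tendsto_coxProcess_atBot_of_coxTime_eq_top hl hg hl0' (fun s hs => hg0 s hs.le) hgldiv
  refine ⟨⟨hsurvival, hsurvival ▸ ENNReal.ofReal_pos.2 (Real.exp_pos _)⟩,
    .of_forall fun ω => ⟨_, coxProcess_le_of_nonneg hl0 hg0⟩, .of_forall hdiverge, ?_⟩
  rw [← hsurvival]
  exact measure_mono hdiverge

/-- **A bounded martingale from the Cox construction that diverges to `-∞` with positive
probability.** Suppose additionally that `∫_0^∞ λ(s) ds < ∞` and `∫_0^∞ γ(s)λ(s) ds = ∞`.
Then: (i) `P(ρ = ∞) = exp(-∫_0^∞ λ) > 0`; (ii) almost surely `sup_t X_t < ∞`; and (iii)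
a.s. on `{ρ = ∞}` one has `X_t → -∞`, hence
`P(limsup_{t→∞} X_t = -∞) ≥ exp(-∫_0^∞ λ) > 0`. -/
theorem coxProcess_bounded_and_divergent {mΩ : MeasurableSpace Ω} (μ : Measure Ω)
    [IsProbabilityMeasure μ]
    (Θ : Ω → ℝ) (hΘmeas : Measurable Θ)
    (hΘexp : ∀ u : ℝ, 0 ≤ u → μ {ω | u < Θ ω} = ENNReal.ofReal (Real.exp (-u)))
    (l g : ℝ → ℝ) (hl : ContinuousOn l (Ici 0)) (hg : ContinuousOn g (Ici 0))
    (hl0 : ∀ s, 0 ≤ s → 0 ≤ l s) (hg0 : ∀ s, 0 ≤ s → 0 ≤ g s)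
    (hlint : IntegrableOn l (Ioi 0) volume)
    (hgldiv : ∫⁻ s in Ioi (0 : ℝ), ENNReal.ofReal (g s * l s) = ∞) :
    (μ {ω | coxTime l Θ ω = ∞} = ENNReal.ofReal (Real.exp (-∫ s in Ioi (0 : ℝ), l s)) ∧
      0 < μ {ω | coxTime l Θ ω = ∞}) ∧
    (∀ᵐ ω ∂μ, ∃ C : ℝ, ∀ t : ℝ≥0, coxProcess l g Θ t ω ≤ C) ∧
    (∀ᵐ ω ∂μ, coxTime l Θ ω = ∞ →
      Tendsto (fun t : ℝ≥0 => coxProcess l g Θ t ω) atTop atBot) ∧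
    ENNReal.ofReal (Real.exp (-∫ s in Ioi (0 : ℝ), l s)) ≤
      μ {ω | Tendsto (fun t : ℝ≥0 => coxProcess l g Θ t ω) atTop atBot} :=
  coxProcess_bounded_and_divergent_general (mΩ := mΩ) μ Θ hΘexp l g hl hg hl0 hg0 hlint hgldiv

end PaperStmt
end
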